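/- For all positive integers r, n, the rank generating function of the balanced elements satisfies Σ_{w ∈ C(r,n)} q^{ℓ_{T(r,n)}(w)} = ∏_{i=1}^{n-1} (1 + r·i·q). -/

import Mathlib

attribute [local instance] Classical.propDecidable

/-- The absolute length of `w` with respect to a set `T`. -/
noncomputable def absLength {G : Type*} [Group G] (T : Set G) (w : G) : ℕ :=
  sInf {n | ∃ l : List G, (∀ t ∈ l, t ∈ T) ∧ l.prod = w ∧ l.length = n}

/-- The absolute order: `u ≤_T v` iff `ℓ_T(u) + ℓ_T(v u⁻¹) = ℓ_T(v)`. -/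
def absLe {G : Type*} [Group G] (T : Set G) (u v : G) : Prop :=
  absLength T u + absLength T (v * u⁻¹) = absLength T v

/-- The wreath product `G(r,n) = Z_r ≀ S_n`, whose elements are the pairs
`[(c₁,…,c_n); π]` with `c_i ∈ Z_r` and `π ∈ S_n`. -/
def WreathG (r n : ℕ) : Type := (Fin n → ZMod r) × Equiv.Perm (Fin n)

namespace WreathG

variable {r n : ℕ}

instance : Mul (WreathG r n) :=
  ⟨fun g h => (fun i => g.1 i + h.1 (g.2⁻¹ i), g.2 * h.2)⟩

instance : One (WreathG r n) := ⟨(fun _ => 0, 1)⟩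

instance : Inv (WreathG r n) := ⟨fun g => (fun i => -g.1 (g.2 i), g.2⁻¹)⟩

instance : Group (WreathG r n) :=
  Group.ofLeftAxioms
    (by
      rintro ⟨a, α⟩ ⟨b, β⟩ ⟨c, γ⟩
      show ((fun i => (a i + b (α⁻¹ i)) + c ((α * β)⁻¹ i), (α * β) * γ) : WreathG r n) =
        (fun i => a i + (b (α⁻¹ i) + c (β⁻¹ (α⁻¹ i))), α * (β * γ))
      refine Prod.ext ?_ (mul_assoc α β γ)
      funext i
      show a i + b (α⁻¹ i) + c ((α * β)⁻¹ i) = a i + (b (α⁻¹ i) + c (β⁻¹ (α⁻¹ i)))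
      rw [add_assoc, mul_inv_rev, Equiv.Perm.mul_apply])
    (by
      rintro ⟨a, α⟩
      show ((fun i => (0 : ZMod r) + a ((1 : Equiv.Perm (Fin n))⁻¹ i), 1 * α) : WreathG r n)
        = (a, α)
      refine Prod.ext ?_ (one_mul α)
      funext i
      simp)
    (by
      rintro ⟨a, α⟩
      show ((fun i => -a (α i) + a (α⁻¹⁻¹ i), α⁻¹ * α) : WreathG r n) = ((fun _ => 0), 1)
      refine Prod.ext ?_ (inv_mul_cancel α)
      funext i
      simp)

instance [NeZero r] : Fintype (WreathG r n) :=
  inferInstanceAs (Fintype ((Fin n → ZMod r) × Equiv.Perm (Fin n)))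

/-- The canonical projection `ψ : G(r,n) → S_n`, `[c̄; π] ↦ π`. -/
def proj : WreathG r n →* Equiv.Perm (Fin n) where
  toFun g := g.2
  map_one' := rfl
  map_mul' _ _ := rfl

/-- An element of `G(r,n)` is balanced if, for each of its cycles, the sum of the colors
of the elements of the cycle is zero (mod `r`). -/
def Balanced (g : WreathG r n) : Prop :=
  ∀ i : Fin n, (∑ j ∈ Finset.univ.filter (g.2.SameCycle i ·), g.1 j) = 0

/-- The primitive `r`-th root of unity `e^{2πi/r}`. -/
noncomputable def zeta (r : ℕ) : ℂ := Complex.exp (2 * Real.pi * Complex.I / r)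

/-- The standard action of `G(r,n)` on `ℂⁿ`, permuting coordinates and multiplying them
by `r`-th roots of unity: `(g · v)_i = ζ^{c_i} v_{π⁻¹(i)}`. -/
noncomputable def toLin (g : WreathG r n) : (Fin n → ℂ) →ₗ[ℂ] (Fin n → ℂ) where
  toFun v := fun i => zeta r ^ (g.1 i).val * v (g.2⁻¹ i)
  map_add' u v := by funext i; simp [mul_add]
  map_smul' c v := by funext i; simp [Pi.smul_apply, smul_eq_mul]; ring

/-- The set `T(r,n)` of pseudoreflections of `G(r,n)`: the elements fixing a hyperplane
(codimension one subspace) of `ℂⁿ`. -/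
noncomputable def pseudoReflections (r n : ℕ) : Set (WreathG r n) :=
  {g | Module.finrank ℂ (LinearMap.ker (toLin g - LinearMap.id)) = n - 1}

/-- The absolute order on the set `C(r,n)` of balanced elements: the reflexive and
transitive closure of the relation consisting of the pairs `(u,v)` of balanced elements
with `v = τ u` for some balanced pseudoreflection `τ` and `ℓ_{T(r,n)}(u) < ℓ_{T(r,n)}(v)`. -/
def cLe (u v : WreathG r n) : Prop :=
  Relation.ReflTransGen
    (fun a b => Balanced a ∧ Balanced b ∧
      ∃ τ ∈ pseudoReflections r n, Balanced τ ∧ b = τ * a ∧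
        absLength (pseudoReflections r n) a < absLength (pseudoReflections r n) b)
    u v

end WreathG

/-!
Write `π` for the permutation underlying `g ∈ C(r,n)` and `cyc π` for its number of cycles,
fixed points included. Then `ℓ_T(g) = n - cyc π`. A pseudoreflection fixes a hyperplane, so
a product of `k` of them fixes a subspace of codimension at most `k`. A vector fixed by `g`
is determined by its values at one point of each cycle, so `Fix g` has dimension at most
`cyc π`. Together these give `ℓ_T(g) ≥ n - cyc π`. Conversely, if `π a ≠ a`, one reflection
of transposition type splits `a` off its cycle as a fixed point of color `0` and leaves the
element balanced, and induction gives a word of length `n - cyc π`.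

For a fixed `π` the balanced colorings form the kernel of the surjective map of cycle sums
`(ℤ/r)ⁿ → (ℤ/r)^(cyc π)`, so there are `r ^ (n - cyc π)` of them. The generating function is
therefore `∑_π (r q) ^ (n - cyc π)`, and the Stirling identity
`∑_π q ^ (n - cyc π) = ∏_{i<n} (1 + i q)` gives the product.
-/

open Finset Polynomial

namespace Equiv.Perm

variable {α : Type*} {π : Perm α} {x y a : α}

theorem SameCycle.mem_of_mapsTo [Finite α] {s : Set α} (hs : Set.MapsTo π s s)
    (h : π.SameCycle x y) (hx : x ∈ s) : y ∈ s := by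
  obtain ⟨k, rfl⟩ := h.exists_nat_pow_eq
  exact hs.perm_pow k hx

variable [DecidableEq α]

theorem swap_mul_apply_self (π : Perm α) (a : α) : (swap a (π a) * π) a = a := by
  rw [mul_apply, swap_apply_right]

theorem sameCycle_swap_mul_apply (π : Perm α) (a z : α) :
    π.SameCycle z ((swap a (π a) * π) z) := by
  rcases eq_or_ne z a with rfl | hza
  · rw [swap_mul_apply_self]
  rw [mul_apply, swap_apply_def]
  split_ifs with h₁ h₂
  · rw [← h₁]
    exact (SameCycle.refl π z).apply_right.apply_right
  · exact absurd (π.injective h₂) hza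
  · exact (SameCycle.refl π z).apply_right

theorem sameCycle_swap_mul_iff [Finite α] (hπa : π a ≠ a) (hx : x ≠ a) (hy : y ≠ a) :
    (swap a (π a) * π).SameCycle x y ↔ π.SameCycle x y := by
  set π' := swap a (π a) * π
  refine ⟨fun h => h.mem_of_mapsTo (s := {z | π.SameCycle x z})
    (fun z hz => hz.trans (sameCycle_swap_mul_apply π a z)) .rfl, fun h => ?_⟩
  -- Away from `a`, the steps of `π` are steps of `π'`, except `π⁻¹ a ↦ a ↦ π a`,
  -- which `π'` shortcuts to `π⁻¹ a ↦ π a`.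
  let skip : α → α := fun z => if z = a then π⁻¹ a else z
  have hstep (z : α) : π'.SameCycle (skip z) (skip (π z)) := by
    rcases eq_or_ne z a with rfl | hza
    · have : π' (π⁻¹ z) = π z := by simp [π', swap_apply_left]
      simp only [skip, if_pos, if_neg hπa]
      exact this ▸ (SameCycle.refl π' _).apply_right
    by_cases hπz : π z = a
    · have : π⁻¹ a = z := inv_eq_iff_eq.mpr hπz.symm
      simp only [skip, if_neg hza, if_pos hπz, this]
      exact .rfl
    · have : π' z = π z := by
        rw [mul_apply, swap_apply_of_ne_of_ne hπz (π.injective.ne hza)]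
      simp only [skip, if_neg hza, if_neg hπz]
      exact this ▸ (SameCycle.refl π' z).apply_right
  simpa [skip, hx, hy] using h.mem_of_mapsTo (s := {z | π'.SameCycle x (skip z)})
    (fun z hz => hz.trans (hstep z)) (by simp only [Set.mem_ofPred_eq, skip, if_neg hx]; rfl)

variable [Fintype α]

noncomputable def cycleFinset (π : Perm α) (x : α) : Finset α := {y | π.SameCycle x y}

/-- Fixed points count as cycles, unlike in `Equiv.Perm.cycleType`. -/
noncomputable def numCycles (π : Perm α) : ℕ := #(univ.image π.cycleFinset)

@[simp]
theorem mem_cycleFinset : y ∈ π.cycleFinset x ↔ π.SameCycle x y := by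
  simp [cycleFinset]

theorem cycleFinset_eq_iff : π.cycleFinset x = π.cycleFinset y ↔ π.SameCycle x y := by
  refine ⟨fun h => mem_cycleFinset.mp (h ▸ mem_cycleFinset.mpr .rfl), fun h => ?_⟩
  ext z
  simp only [mem_cycleFinset]
  exact ⟨h.symm.trans, h.trans⟩

theorem cycleFinset_of_apply_eq (h : π x = x) : π.cycleFinset x = {x} := by
  ext y
  simp only [mem_cycleFinset, mem_singleton]
  exact ⟨fun hxy => (hxy.eq_of_left h).symm, fun hy => hy ▸ .rfl⟩

theorem numCycles_le_card (π : Perm α) : π.numCycles ≤ Fintype.card α :=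
  card_image_le

theorem numCycles_one : (1 : Perm α).numCycles = Fintype.card α := by
  rw [numCycles, image_congr fun x _ => cycleFinset_of_apply_eq rfl,
    card_image_of_injective _ singleton_injective, card_univ]

theorem cycleFinset_swap_mul (hπa : π a ≠ a) (hx : x ≠ a) :
    (swap a (π a) * π).cycleFinset x = (π.cycleFinset x).erase a := by
  ext y
  rw [mem_erase, mem_cycleFinset, mem_cycleFinset]
  rcases eq_or_ne y a with rfl | hy
  · simpa using fun h => hx (h.eq_of_right (swap_mul_apply_self π y))
  · simp [hy, sameCycle_swap_mul_iff hπa hx hy]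

theorem numCycles_swap_mul (hπa : π a ≠ a) :
    (swap a (π a) * π).numCycles = π.numCycles + 1 := by
  have himage : univ.image (swap a (π a) * π).cycleFinset =
      insert {a} (((univ.erase a).image π.cycleFinset).image (·.erase a)) := by
    rw [← insert_erase (mem_univ a), image_insert, erase_insert (notMem_erase a univ),
      cycleFinset_of_apply_eq (swap_mul_apply_self π a), image_image]
    congr 1
    exact image_congr fun x hx => cycleFinset_swap_mul hπa (ne_of_mem_erase hx)
  have hinj : Set.InjOn (·.erase a) ((univ.erase a).image π.cycleFinset : Set (Finset α)) := by
    simp only [coe_image, Set.InjOn, Set.forall_mem_image]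
    intro x _ y hy h
    have : y ∈ (π.cycleFinset x).erase a :=
      h ▸ mem_erase.mpr ⟨ne_of_mem_erase hy, mem_cycleFinset.mpr .rfl⟩
    exact cycleFinset_eq_iff.mpr (mem_cycleFinset.mp (mem_of_mem_erase this))
  have hall : (univ.erase a).image π.cycleFinset = univ.image π.cycleFinset := by
    refine (image_subset_image (erase_subset a univ)).antisymm fun C hC => ?_
    obtain ⟨x, -, rfl⟩ := mem_image.mp hC
    rcases eq_or_ne x a with rfl | hx
    · exact mem_image.mpr ⟨π x, mem_erase.mpr ⟨hπa, mem_univ _⟩,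
        cycleFinset_eq_iff.mpr (SameCycle.refl π x).apply_right.symm⟩
    · exact mem_image_of_mem _ (mem_erase.mpr ⟨hx, mem_univ x⟩)
  rw [numCycles, himage, card_insert_of_notMem, card_image_of_injOn hinj, hall, numCycles]
  simp only [mem_image, not_exists, not_and]
  intro C _ h
  simpa using congrArg (a ∈ ·) h

variable {m : ℕ}

theorem decomposeFin_symm_eq_swap_mul (p : Fin (m + 1)) (σ : Perm (Fin m)) :
    decomposeFin.symm (p, σ) = swap 0 p * decomposeFin.symm (0, σ) := by
  ext y
  cases y using Fin.cases <;> simp [decomposeFin_symm_apply_succ]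

theorem decomposeFin_symm_zero_apply_succ (σ : Perm (Fin m)) (x : Fin m) :
    decomposeFin.symm (0, σ) x.succ = (σ x).succ := by
  simp [decomposeFin_symm_apply_succ]

theorem decomposeFin_symm_zero_pow_apply_succ (σ : Perm (Fin m)) (k : ℕ) (x : Fin m) :
    (decomposeFin.symm (0, σ) ^ k) x.succ = ((σ ^ k) x).succ := by
  induction k with
  | zero => rfl
  | succ k ih =>
    rw [pow_succ', mul_apply, ih, decomposeFin_symm_zero_apply_succ, pow_succ', mul_apply]

theorem sameCycle_decomposeFin_symm_zero_succ_iff {σ : Perm (Fin m)} {x y : Fin m} :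
    (decomposeFin.symm (0, σ)).SameCycle x.succ y.succ ↔ σ.SameCycle x y := by
  constructor
  · intro h
    obtain ⟨k, hk⟩ := h.exists_nat_pow_eq
    rw [decomposeFin_symm_zero_pow_apply_succ, Fin.succ_inj] at hk
    exact ⟨k, by rw [zpow_natCast, hk]⟩
  · intro h
    obtain ⟨k, rfl⟩ := h.exists_nat_pow_eq
    exact ⟨k, by rw [zpow_natCast, decomposeFin_symm_zero_pow_apply_succ]⟩

theorem numCycles_decomposeFin_symm_zero (σ : Perm (Fin m)) :
    (decomposeFin.symm (0, σ)).numCycles = σ.numCycles + 1 := by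
  have hsucc (x : Fin m) : (decomposeFin.symm (0, σ)).cycleFinset x.succ =
      (σ.cycleFinset x).map (Fin.succEmb m) := by
    ext y
    cases y using Fin.cases with
    | zero =>
      simpa using fun h => Fin.succ_ne_zero x (h.eq_of_right (decomposeFin_symm_apply_zero 0 σ))
    | succ y => simp [sameCycle_decomposeFin_symm_zero_succ_iff]
  have himage : (univ.map ⟨Fin.succ, Fin.succ_injective m⟩).image
      (decomposeFin.symm (0, σ)).cycleFinset =
        (univ.image σ.cycleFinset).image (map (Fin.succEmb m)) := by
    rw [map_eq_image, image_image, image_image]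
    exact image_congr fun x _ => hsucc x
  rw [numCycles, Fin.univ_succ, cons_eq_insert, image_insert,
    cycleFinset_of_apply_eq (decomposeFin_symm_apply_zero 0 σ), himage, card_insert_of_notMem,
    card_image_of_injective _ (map_injective _), numCycles]
  simp only [mem_image, not_exists, not_and]
  intro C _ h
  simpa using congrArg (0 ∈ ·) h

theorem numCycles_decomposeFin_symm (p : Fin (m + 1)) (σ : Perm (Fin m)) :
    (decomposeFin.symm (p, σ)).numCycles = σ.numCycles + if p = 0 then 1 else 0 := by
  split_ifs with hp
  · exact hp ▸ numCycles_decomposeFin_symm_zero σ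
  · have hsplit := numCycles_swap_mul (π := decomposeFin.symm (p, σ)) (a := 0)
      (by rwa [decomposeFin_symm_apply_zero])
    have : swap 0 p * decomposeFin.symm (p, σ) = decomposeFin.symm (0, σ) := by
      rw [decomposeFin_symm_eq_swap_mul p σ, swap_mul_self_mul]
    rw [decomposeFin_symm_apply_zero, this, numCycles_decomposeFin_symm_zero] at hsplit
    omega

theorem sum_pow_sub_numCycles {R : Type*} [CommSemiring R] (q : R) (m : ℕ) :
    ∑ π : Perm (Fin m), q ^ (m - π.numCycles) = ∏ i ∈ range m, (1 + i * q) := by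
  induction m with
  | zero => simp
  | succ m ih =>
    have hsucc (σ : Perm (Fin m)) : q ^ (m + 1 - σ.numCycles) = q ^ (m - σ.numCycles) * q := by
      rw [Nat.sub_add_comm (by simpa using numCycles_le_card σ), pow_succ]
    rw [← decomposeFin.symm.sum_comp, Fintype.sum_prod_type, Fin.sum_univ_succ, prod_range_succ,
      ← ih]
    simp only [numCycles_decomposeFin_symm, Fin.succ_ne_zero, if_true, if_false, add_zero,
      Nat.add_sub_add_right, hsucc, ← sum_mul, sum_const, card_univ, Fintype.card_fin,
      nsmul_eq_mul]
    ring


end Equiv.Perm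

theorem card_filter_forall_sum_fiber_eq_zero {α β R : Type*} [Fintype α] [DecidableEq α]
    [DecidableEq β] [AddCommGroup R] [Fintype R] (p : α → β) :
    #{c : α → R | ∀ x, ∑ y with p y = p x, c y = 0} =
      Fintype.card R ^ (Fintype.card α - #(univ.image p)) := by
  set B := univ.image p
  let q : α → B := fun y => ⟨p y, mem_image_of_mem p (mem_univ y)⟩
  have hq : Function.Surjective q := by
    rintro ⟨b, hb⟩
    obtain ⟨y, -, rfl⟩ := mem_image.mp hb
    exact ⟨y, rfl⟩
  let Φ : (α → R) →+ (B → R) :=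
    { toFun := fun c b => ∑ y with q y = b, c y
      map_zero' := by ext; simp
      map_add' := fun c d => by ext; simp [sum_add_distrib] }
  have hΦ : Function.Surjective Φ := by
    intro f
    refine ⟨fun y => if Function.surjInv hq (q y) = y then f (q y) else 0, funext fun b => ?_⟩
    change ∑ y with q y = b, _ = f b
    rw [sum_congr rfl fun y hy => by rw [(mem_filter.mp hy).2], sum_ite_eq, if_pos]
    exact mem_filter.mpr ⟨mem_univ _, Function.surjInv_eq hq b⟩
  have hker : #{c : α → R | ∀ x, ∑ y with p y = p x, c y = 0} = Nat.card Φ.ker := by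
    rw [Nat.card_eq_fintype_card, Fintype.card_subtype]
    congr 1
    ext c
    simp only [mem_filter, mem_univ, true_and, AddMonoidHom.mem_ker, funext_iff, hq.forall]
    simp [Φ, q]
  have hcard := Φ.ker.card_mul_index
  rw [AddSubgroup.index_ker, AddMonoidHom.range_eq_top.mpr hΦ, AddSubgroup.card_top,
    ← hker] at hcard
  simp only [Nat.card_eq_fintype_card, Fintype.card_fun, Fintype.card_coe] at hcard
  have hB : #B ≤ Fintype.card α := card_image_le
  rw [← pow_sub_mul_pow _ hB] at hcard
  exact Nat.eq_of_mul_eq_mul_right (pow_pos Fintype.card_pos _) hcard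

theorem LinearMap.finrank_ker_sub_id_add_le {K V : Type*} [Field K] [AddCommGroup V]
    [Module K V] [FiniteDimensional K V] (f g : V →ₗ[K] V) :
    Module.finrank K (ker (f - id)) + Module.finrank K (ker (g - id)) ≤
      Module.finrank K (ker (f ∘ₗ g - id)) + Module.finrank K V := by
  have hinf : ker (f - id) ⊓ ker (g - id) ≤ ker (f ∘ₗ g - id) := by
    intro v hv
    simp only [Submodule.mem_inf, mem_ker, sub_apply, id_apply, sub_eq_zero] at hv ⊢
    rw [comp_apply, hv.2, hv.1]
  have hsup := Submodule.finrank_le (ker (f - id) ⊔ ker (g - id))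
  have := Submodule.finrank_sup_add_finrank_inf_eq (ker (f - id)) (ker (g - id))
  have := Submodule.finrank_mono hinf
  omega

namespace WreathG

variable {r n : ℕ}

theorem zeta_pow_val_add [NeZero r] (x y : ZMod r) :
    zeta r ^ (x + y).val = zeta r ^ x.val * zeta r ^ y.val := by
  have hζ : IsPrimitiveRoot (zeta r) r := Complex.isPrimitiveRoot_exp r (NeZero.ne r)
  have hmod := pow_mod_orderOf (zeta r) (x.val + y.val)
  rwa [← hζ.eq_orderOf, ← ZMod.val_add, pow_add] at hmod

theorem toLin_apply (g : WreathG r n) (v : Fin n → ℂ) (i : Fin n) :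
    toLin g v i = zeta r ^ (g.1 i).val * v (g.2⁻¹ i) := rfl

theorem toLin_one : toLin (1 : WreathG r n) = LinearMap.id := by
  refine LinearMap.ext fun v => funext fun i => ?_
  rw [toLin_apply]
  show zeta r ^ (0 : ZMod r).val * v ((1 : Equiv.Perm (Fin n))⁻¹ i) = v i
  simp

theorem toLin_mul [NeZero r] (g h : WreathG r n) : toLin (g * h) = toLin g ∘ₗ toLin h := by
  refine LinearMap.ext fun v => funext fun i => ?_
  rw [LinearMap.comp_apply, toLin_apply, toLin_apply, toLin_apply]
  show zeta r ^ (g.1 i + h.1 (g.2⁻¹ i)).val * v ((g.2 * h.2)⁻¹ i) = _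
  rw [zeta_pow_val_add, mul_inv_rev, Equiv.Perm.mul_apply, mul_assoc]

noncomputable def fixedSpace (g : WreathG r n) : Submodule ℂ (Fin n → ℂ) :=
  LinearMap.ker (toLin g - LinearMap.id)

theorem mem_fixedSpace {g : WreathG r n} {v : Fin n → ℂ} :
    v ∈ fixedSpace g ↔ toLin g v = v := by
  simp [fixedSpace, sub_eq_zero]

theorem finrank_fixedSpace_add_le [NeZero r] (g h : WreathG r n) :
    Module.finrank ℂ (fixedSpace g) + Module.finrank ℂ (fixedSpace h) ≤
      Module.finrank ℂ (fixedSpace (g * h)) + n := by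
  have := LinearMap.finrank_ker_sub_id_add_le (toLin g) (toLin h)
  rwa [← toLin_mul, Module.finrank_fin_fun] at this

theorem fixedSpace_inv [NeZero r] (g : WreathG r n) : fixedSpace g⁻¹ = fixedSpace g := by
  suffices ∀ g : WreathG r n, fixedSpace g ≤ fixedSpace g⁻¹ from
    le_antisymm (by simpa using this g⁻¹) (this g)
  intro g v hv
  rw [mem_fixedSpace] at hv ⊢
  conv_lhs => rw [← hv]
  rw [← LinearMap.comp_apply, ← toLin_mul, inv_mul_cancel, toLin_one, LinearMap.id_apply]

theorem inv_mem_pseudoReflections [NeZero r] {t : WreathG r n}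
    (ht : t ∈ pseudoReflections r n) : t⁻¹ ∈ pseudoReflections r n := by
  change Module.finrank ℂ (fixedSpace t⁻¹) = n - 1
  rwa [fixedSpace_inv]

theorem le_finrank_fixedSpace_prod_add_length [NeZero r] (l : List (WreathG r n))
    (hl : ∀ t ∈ l, t ∈ pseudoReflections r n) :
    n ≤ Module.finrank ℂ (fixedSpace l.prod) + l.length := by
  induction l with
  | nil =>
    rw [List.prod_nil, List.length_nil, fixedSpace, toLin_one, sub_self, LinearMap.ker_zero,
      finrank_top, Module.finrank_fin_fun, add_zero]
  | cons t l ih =>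
    have ht : Module.finrank ℂ (fixedSpace t) = n - 1 := hl t List.mem_cons_self
    have := ih fun s hs => hl s (List.mem_cons_of_mem t hs)
    have := finrank_fixedSpace_add_le t l.prod
    rw [List.prod_cons, List.length_cons]
    omega

theorem balanced_iff {g : WreathG r n} :
    Balanced g ↔ ∀ i, ∑ j ∈ g.2.cycleFinset i, g.1 j = 0 := Iff.rfl

theorem eq_one_of_balanced {g : WreathG r n} (hg : Balanced g) (h : g.2 = 1) : g = 1 :=
  Prod.ext (funext fun i => by
    have := balanced_iff.mp hg i
    rwa [h, Equiv.Perm.cycleFinset_of_apply_eq rfl, sum_singleton] at this) h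

theorem finrank_fixedSpace_le_numCycles (g : WreathG r n) :
    Module.finrank ℂ (fixedSpace g) ≤ g.2.numCycles := by
  have hrep (C : univ.image g.2.cycleFinset) : ∃ x, g.2.cycleFinset x = C := by
    obtain ⟨x, -, hx⟩ := mem_image.mp C.2
    exact ⟨x, hx⟩
  choose rep hrep using hrep
  have hvanish {v : Fin n → ℂ} (hv : v ∈ fixedSpace g) {x y : Fin n} (hxy : g.2.SameCycle x y)
      (hx : v x = 0) : v y = 0 := by
    refine hxy.mem_of_mapsTo (s := {z | v z = 0}) (fun z (hz : v z = 0) => ?_) hx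
    have := congrFun (mem_fixedSpace.mp hv) (g.2 z)
    rw [toLin_apply, show g.2⁻¹ (g.2 z) = z from Equiv.Perm.inv_eq_iff_eq.mpr rfl, hz,
      mul_zero] at this
    exact this.symm
  let φ := LinearMap.funLeft ℂ ℂ rep ∘ₗ (fixedSpace g).subtype
  have hφ : Function.Injective φ := by
    rw [← LinearMap.ker_eq_bot, LinearMap.ker_eq_bot']
    rintro ⟨v, hv⟩ hφv
    ext j
    have hC := hrep ⟨_, mem_image_of_mem _ (mem_univ j)⟩
    exact hvanish hv (Equiv.Perm.cycleFinset_eq_iff.mp hC) (congrFun hφv _)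
  have := LinearMap.finrank_le_finrank_of_injective hφ
  rwa [Module.finrank_fintype_fun_eq_card, Fintype.card_coe] at this

def reflection (a b : Fin n) (d : ZMod r) : WreathG r n :=
  (Pi.single a d - Pi.single b d, Equiv.swap a b)

theorem reflection_mem_pseudoReflections [NeZero r] {a b : Fin n} (hab : a ≠ b) (d : ZMod r) :
    reflection a b d ∈ pseudoReflections r n := by
  let φ : (Fin n → ℂ) →ₗ[ℂ] ℂ := LinearMap.proj a - zeta r ^ d.val • LinearMap.proj b
  have hφ : Function.Surjective φ := fun z =>
    ⟨Pi.single a z, by simp [φ, hab.symm]⟩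
  have hfix : fixedSpace (reflection a b d) = LinearMap.ker φ := by
    ext v
    have hζ : zeta r ^ (-d).val * zeta r ^ d.val = 1 := by
      rw [← zeta_pow_val_add, neg_add_cancel, ZMod.val_zero, pow_zero]
    simp only [mem_fixedSpace, funext_iff, toLin_apply, LinearMap.mem_ker,
      show (reflection a b d).2⁻¹ = Equiv.swap a b from Equiv.swap_inv a b,
      show φ v = v a - zeta r ^ d.val * v b from rfl, sub_eq_zero]
    refine ⟨fun h => by simpa [reflection, hab] using (h a).symm, fun h x => ?_⟩
    rcases eq_or_ne x a with rfl | hxa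
    · simp [reflection, hab, h]
    rcases eq_or_ne x b with rfl | hxb
    · simp [reflection, hab.symm, h, ← mul_assoc, hζ]
    · simp [reflection, hxa, hxb, Equiv.swap_apply_of_ne_of_ne]
  have hrank := LinearMap.finrank_range_add_finrank_ker φ
  rw [LinearMap.range_eq_top.mpr hφ, finrank_top, Module.finrank_self, Module.finrank_fin_fun,
    ← hfix] at hrank
  change Module.finrank ℂ (fixedSpace (reflection a b d)) = n - 1
  omega

/-- The color is chosen so that `a` becomes a fixed point of color `0`. -/
theorem balanced_reflection_mul {g : WreathG r n} (hg : Balanced g) {a : Fin n}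
    (ha : g.2 a ≠ a) : Balanced (reflection a (g.2 a) (-g.1 (g.2 a)) * g) := by
  set b := g.2 a
  set d := -g.1 b
  set g' := reflection a b d * g
  have hcol (i : Fin n) :
      g'.1 i = (Pi.single a d : Fin n → ZMod r) i - (Pi.single b d : Fin n → ZMod r) i +
        g.1 (Equiv.swap a b i) := by
    show _ + g.1 ((Equiv.swap a b)⁻¹ i) = _
    rw [Equiv.swap_inv]
    rfl
  have hperm : g'.2 = Equiv.swap a (g.2 a) * g.2 := rfl
  have hcol_a : g'.1 a = 0 := by simp [hcol, d, Ne.symm ha]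
  rw [balanced_iff, hperm]
  intro i
  rcases eq_or_ne i a with rfl | hia
  · rw [Equiv.Perm.cycleFinset_of_apply_eq (Equiv.Perm.swap_mul_apply_self _ _), sum_singleton,
      hcol_a]
  rw [Equiv.Perm.cycleFinset_swap_mul ha hia, sum_erase _ hcol_a]
  have hab : b ∈ g.2.cycleFinset i ↔ a ∈ g.2.cycleFinset i := by
    simp only [Equiv.Perm.mem_cycleFinset, b, Equiv.Perm.sameCycle_apply_right]
  have hswap :
      ∑ j ∈ g.2.cycleFinset i, g.1 (Equiv.swap a b j) = ∑ j ∈ g.2.cycleFinset i, g.1 j := by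
    refine sum_equiv (Equiv.swap a b) (fun j => ?_) fun _ _ => rfl
    rw [Equiv.swap_apply_def]
    split_ifs with hja hjb
    · exact hja ▸ hab.symm
    · exact hjb ▸ hab
    · rfl
  rw [sum_congr rfl fun j _ => hcol j, sum_add_distrib, hswap, balanced_iff.mp hg i, add_zero,
    sum_sub_distrib, sum_pi_single', sum_pi_single']
  simp only [hab, sub_self]

theorem exists_list_pseudoReflections_prod_eq [NeZero r] {g : WreathG r n} (hg : Balanced g) :
    ∃ l : List (WreathG r n), (∀ t ∈ l, t ∈ pseudoReflections r n) ∧ l.prod = g ∧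
      l.length = n - g.2.numCycles := by
  induction hk : n - g.2.numCycles using Nat.strong_induction_on generalizing g with
  | _ k ih =>
  by_cases h1 : g.2 = 1
  · refine ⟨[], by simp, (eq_one_of_balanced hg h1).symm, ?_⟩
    rw [← hk, h1, Equiv.Perm.numCycles_one, Fintype.card_fin, Nat.sub_self, List.length_nil]
  obtain ⟨a, ha⟩ : ∃ a, g.2 a ≠ a := by
    by_contra! h
    exact h1 (Equiv.ext h)
  set t := reflection a (g.2 a) (-g.1 (g.2 a))
  have ht : t ∈ pseudoReflections r n := reflection_mem_pseudoReflections (Ne.symm ha) _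
  have hcyc : (t * g).2.numCycles = g.2.numCycles + 1 := Equiv.Perm.numCycles_swap_mul ha
  have hle := (t * g).2.numCycles_le_card
  rw [Fintype.card_fin] at hle
  obtain ⟨l, hl, hprod, hlen⟩ := ih (n - (t * g).2.numCycles) (by omega)
    (balanced_reflection_mul hg ha) rfl
  refine ⟨t⁻¹ :: l, ?_, by rw [List.prod_cons, hprod, inv_mul_cancel_left], ?_⟩
  · simpa [inv_mem_pseudoReflections ht] using hl
  · rw [List.length_cons, hlen]
    omega

theorem absLength_of_balanced [NeZero r] {g : WreathG r n} (hg : Balanced g) :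
    absLength (pseudoReflections r n) g = n - g.2.numCycles := by
  obtain ⟨l, hl, hprod, hlen⟩ := exists_list_pseudoReflections_prod_eq hg
  refine le_antisymm (Nat.sInf_le ⟨l, hl, hprod, hlen⟩) (le_csInf ⟨_, l, hl, hprod, hlen⟩ ?_)
  rintro k ⟨l', hl', rfl, rfl⟩
  have := le_finrank_fixedSpace_prod_add_length l' hl'
  have := finrank_fixedSpace_le_numCycles l'.prod
  omega

theorem card_filter_balanced [NeZero r] (π : Equiv.Perm (Fin n)) :
    #{c : Fin n → ZMod r | Balanced ((c, π) : WreathG r n)} = r ^ (n - π.numCycles) := by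
  have := card_filter_forall_sum_fiber_eq_zero (R := ZMod r) π.cycleFinset
  rw [ZMod.card, Fintype.card_fin, ← Equiv.Perm.numCycles] at this
  convert this using 4 with c
  refine balanced_iff.trans (forall_congr' fun x => ?_)
  rw [show ({y | π.cycleFinset y = π.cycleFinset x} : Finset _) = π.cycleFinset x by
    ext; simp [Equiv.Perm.cycleFinset_eq_iff, Equiv.Perm.sameCycle_comm]]

theorem sum_filter_balanced [NeZero r] {M : Type*} [AddCommMonoid M]
    (f : Equiv.Perm (Fin n) → M) :
    ∑ g ∈ univ.filter (fun g : WreathG r n => Balanced g), f g.2 =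
      ∑ π, r ^ (n - π.numCycles) • f π := by
  rw [sum_filter]
  change ∑ g : (Fin n → ZMod r) × Equiv.Perm (Fin n), _ = _
  rw [Fintype.sum_prod_type, sum_comm]
  refine sum_congr rfl fun π _ => ?_
  rw [← sum_filter]
  dsimp only
  rw [sum_const, card_filter_balanced]

end WreathG

theorem rank_gen_of_balanced_elements_general (r n : ℕ) [NeZero r] :
    (∑ g ∈ Finset.univ.filter (fun g : WreathG r n => WreathG.Balanced g),
        (Polynomial.X : Polynomial ℤ) ^ absLength (WreathG.pseudoReflections r n) g) =
      ∏ i ∈ Finset.Ioo 0 n, (1 + Polynomial.C ((r : ℤ) * (i : ℤ)) * Polynomial.X) := by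
  calc _ = ∑ g ∈ univ.filter (fun g : WreathG r n => WreathG.Balanced g),
        (X : ℤ[X]) ^ (n - g.2.numCycles) :=
        sum_congr rfl fun g hg => by rw [WreathG.absLength_of_balanced (mem_filter.mp hg).2]
    _ = ∑ π : Equiv.Perm (Fin n), (C (r : ℤ) * X) ^ (n - π.numCycles) := by
        refine (WreathG.sum_filter_balanced fun π => X ^ (n - π.numCycles)).trans ?_
        simp only [nsmul_eq_mul, mul_pow, map_natCast, Nat.cast_pow]
    _ = ∏ i ∈ range n, (1 + C ((r : ℤ) * (i : ℤ)) * X) := by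
        rw [Equiv.Perm.sum_pow_sub_numCycles]
        refine prod_congr rfl fun i _ => ?_
        simp only [map_mul, map_natCast]
        ring
    _ = _ := by
        refine (prod_subset (fun i hi => mem_range.mpr (mem_Ioo.mp hi).2) fun i _ hi => ?_).symm
        obtain rfl : i = 0 := by simp_all
        simp

theorem rank_gen_of_balanced_elements (r n : ℕ) [NeZero r] [NeZero n] :
    (∑ g ∈ Finset.univ.filter (fun g : WreathG r n => WreathG.Balanced g),
        (Polynomial.X : Polynomial ℤ) ^ absLength (WreathG.pseudoReflections r n) g) =
      ∏ i ∈ Finset.Ioo 0 n, (1 + Polynomial.C ((r : ℤ) * (i : ℤ)) * Polynomial.X) :=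
  rank_gen_of_balanced_elements_general r n
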